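/- For complex matrices A, B ∈ M_n(ℂ), the L²-operator norm of the Hadamard (Schur, entrywise) product satisfies ‖A ⊙ B‖ ≤ ‖A‖·‖B‖. -/

import Mathlib

open Matrix
open scoped Matrix Matrix.Norms.L2Operator

/-!
Entry `i` of `(A ⊙ B) x` is entry `i` of `A (bᵢ ⊙ x)`, where `bᵢ` is row `i` of `B`. Bounding the
single entry by the whole vector gives `|((A ⊙ B) x)ᵢ|² ≤ ‖A‖² ∑ⱼ |Bᵢⱼ|² |xⱼ|²`; summing over `i`
exchanges the sums, and every column of `B` has Euclidean length at most `‖B‖`.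
-/

namespace Matrix

lemma hadamard_mulVec_apply {R m n : Type*} [CommSemiring R] [Fintype n]
    (A B : Matrix m n R) (x : n → R) (i : m) : ((A ⊙ B) *ᵥ x) i = (A *ᵥ (B i * x)) i := by
  simp only [mulVec, dotProduct, hadamard_apply, Pi.mul_apply, mul_assoc]

variable {𝕜 m n : Type*} [RCLike 𝕜] [Fintype m] [Fintype n] [DecidableEq n]

lemma sum_norm_mulVec_sq_le (A : Matrix m n 𝕜) (x : n → 𝕜) :
    ∑ i, ‖(A *ᵥ x) i‖ ^ 2 ≤ ‖A‖ ^ 2 * ∑ j, ‖x j‖ ^ 2 := by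
  have h := pow_le_pow_left₀ (norm_nonneg _) (A.l2_opNorm_mulVec (WithLp.toLp 2 x)) 2
  rwa [mul_pow, EuclideanSpace.norm_sq_eq, EuclideanSpace.norm_sq_eq] at h

lemma sum_norm_col_sq_le (B : Matrix m n 𝕜) (j : n) : ∑ i, ‖B i j‖ ^ 2 ≤ ‖B‖ ^ 2 := by
  simpa [Pi.single_apply, apply_ite] using B.sum_norm_mulVec_sq_le (Pi.single j 1)

lemma sum_norm_hadamard_mulVec_sq_le (A B : Matrix m n 𝕜) (x : n → 𝕜) :
    ∑ i, ‖((A ⊙ B) *ᵥ x) i‖ ^ 2 ≤ (‖A‖ * ‖B‖) ^ 2 * ∑ j, ‖x j‖ ^ 2 :=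
  calc ∑ i, ‖((A ⊙ B) *ᵥ x) i‖ ^ 2
      ≤ ∑ i, ∑ k, ‖(A *ᵥ (B i * x)) k‖ ^ 2 := by
        gcongr with i
        rw [hadamard_mulVec_apply]
        exact Finset.single_le_sum (f := fun k ↦ ‖(A *ᵥ (B i * x)) k‖ ^ 2)
          (fun _ _ ↦ by positivity) (Finset.mem_univ i)
    _ ≤ ∑ i, ‖A‖ ^ 2 * ∑ j, ‖B i j * x j‖ ^ 2 := by
        gcongr with i
        exact A.sum_norm_mulVec_sq_le _
    _ = ‖A‖ ^ 2 * ∑ j, (∑ i, ‖B i j‖ ^ 2) * ‖x j‖ ^ 2 := by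
        simp only [← Finset.mul_sum, Finset.sum_mul, norm_mul, mul_pow]
        rw [Finset.sum_comm]
    _ ≤ ‖A‖ ^ 2 * ∑ j, ‖B‖ ^ 2 * ‖x j‖ ^ 2 := by
        gcongr with j
        exact B.sum_norm_col_sq_le j
    _ = (‖A‖ * ‖B‖) ^ 2 * ∑ j, ‖x j‖ ^ 2 := by
        rw [← Finset.mul_sum]; ring

theorem l2_opNorm_hadamard_le (A B : Matrix m n 𝕜) : ‖A ⊙ B‖ ≤ ‖A‖ * ‖B‖ := by
  refine (A ⊙ B).l2_opNorm_def ▸ ContinuousLinearMap.opNorm_le_bound _ (by positivity) fun x ↦ ?_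
  refine (sq_le_sq₀ (norm_nonneg _) (by positivity)).mp ?_
  rw [EuclideanSpace.norm_sq_eq, mul_pow, EuclideanSpace.norm_sq_eq]
  exact sum_norm_hadamard_mulVec_sq_le A B x.ofLp

end Matrix

/-- For complex matrices `A, B ∈ Mₙ(ℂ)`, the L²-operator norm of the Hadamard (Schur)
product satisfies `‖A ⊙ B‖ ≤ ‖A‖ * ‖B‖`. -/
theorem stmt_3 (n : ℕ) (A B : Matrix (Fin n) (Fin n) ℂ) :
    ‖A ⊙ B‖ ≤ ‖A‖ * ‖B‖ :=
  l2_opNorm_hadamard_le A B
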